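/- arXiv:2405.04391 — 8 statements merged into one kernel-verified Lean document; each statement's English description precedes it below -/
import Mathlib

section
/- Let p be a prime, let S be a subset of 𝔽_p with |S| ≥ 2, and let k ≥ 1 and r ≥ 0 be integers. If φ₁, …, φ_k : 𝔽_p^n → 𝔽_p are r-separated mod-p forms, then for every (y₁, …, y_k) ∈ 𝔽_p^k one has |ℙ_{x∈S^n}(φ₁(x) = y₁, …, φ_k(x) = y_k) − p^{−k}| ≤ (1 − p^{−2})^r. -/
/-!
Expand the indicator of `φ x = y` over the characters `a ↦ ψ (a ⬝ᵥ ·)` of `𝔽_p^k`, `ψ` the standard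
character of `ZMod p`. The term `a = 0` contributes the main term `|S|^n`; for `a ≠ 0` the sum over
`x ∈ S^n` factors as `∏ i, ∑ s ∈ S, ψ (c i * s)` with `c = a ᵥ* φ`, a form with at least `r` nonzero
coefficients. Each factor with `c i ≠ 0` is a sum of `ψ` over a set `T` of `|S| ≥ 2` distinct
points, and `‖∑ t ∈ T, ψ t‖² = ∑ u ∈ T, ∑ v ∈ T, Re ψ (u - v)` with off-diagonal terms at most
`cos (2π/p) ≤ 1 - 8/p²`, which gives `‖∑ t ∈ T, ψ t‖ ≤ |T| (1 - p⁻²)`.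
-/

open Finset

/-- The support of a mod-p form given by its coefficient vector. -/
def supp {p n : ℕ} (φ : Fin n → ZMod p) : Finset (Fin n) :=
  Finset.univ.filter fun i => φ i ≠ 0

/-- Evaluation of a mod-p form (given by coefficients) at a point. -/
def evalForm {p n : ℕ} (φ x : Fin n → ZMod p) : ZMod p := ∑ i, φ i * x i

/-- The sumset a₁S + ⋯ + a_mS. -/
def sumsetSub {p m : ℕ} (a : Fin m → ZMod p) (S : Finset (ZMod p)) : Finset (ZMod p) :=
  (Fintype.piFinset fun _ : Fin m => S).image fun s => ∑ i, a i * s i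

/-- L(S,E): smallest L such that for all nonzero a₁,…,a_L the sumset a₁S+⋯+a_LS ⊄ E. -/
noncomputable def LSE {p : ℕ} (S E : Finset (ZMod p)) : ℕ :=
  sInf {L : ℕ | ∀ a : Fin L → ZMod p, (∀ i, a i ≠ 0) → ¬ sumsetSub a S ⊆ E}

/-- β(p,S) = |S|^{-⌈(p-1)/(|S|-1)⌉}. -/
noncomputable def betaPS (p : ℕ) (S : Finset (ZMod p)) : ℝ :=
  ((S.card : ℝ) ^ ⌈((p : ℝ) - 1) / ((S.card : ℝ) - 1)⌉₊)⁻¹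

open Real Matrix

lemma AddChar.map_sum_eq_prod {A M ι : Type*} [AddCommMonoid A] [CommMonoid M]
    (ψ : AddChar A M) (s : Finset ι) (f : ι → A) : ψ (∑ i ∈ s, f i) = ∏ i ∈ s, ψ (f i) := by
  simpa [← ofAdd_sum] using map_prod ψ.toMonoidHom (fun i => Multiplicative.ofAdd (f i)) s

lemma Real.two_div_le_sin_pi_mul_div {p v : ℕ} (hv : 0 < v) (hvp : v < p) :
    2 / (p : ℝ) ≤ sin (π * v / p) := by
  wlog h : 2 * v ≤ p generalizing v
  · have := this (v := p - v) (by omega) (by omega) (by omega)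
    rwa [Nat.cast_sub hvp.le, mul_sub, sub_div,
      mul_div_cancel_right₀ _ (Nat.cast_ne_zero.2 (by omega)), sin_pi_sub] at this
  have hp : (0 : ℝ) < p := by exact_mod_cast hv.trans hvp
  have hle : π * v / p ≤ π / 2 := by
    rw [div_le_div_iff₀ hp two_pos]
    have : (2 * v : ℝ) ≤ p := by exact_mod_cast h
    nlinarith [pi_pos]
  calc 2 / (p : ℝ) ≤ 2 * v / p := by gcongr; linarith [(Nat.one_le_cast.2 hv : (1 : ℝ) ≤ v)]
    _ = 2 / π * (π * v / p) := by field_simp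
    _ ≤ sin (π * v / p) := mul_le_sin (by positivity) hle

namespace ZMod

section NeZero

variable {p : ℕ} [NeZero p]

lemma re_stdAddChar_le {d : ZMod p} (hd : d ≠ 0) :
    (stdAddChar d).re ≤ 1 - 8 / (p : ℝ) ^ 2 := by
  have hre : (stdAddChar d).re = cos (2 * (π * d.val / p)) := by
    rw [stdAddChar_apply, toCircle_apply, ← Complex.exp_ofReal_mul_I_re]
    congr 2
    push_cast
    ring
  have hsin := Real.two_div_le_sin_pi_mul_div (val_pos.2 hd) (val_lt d)
  have hsq : 4 / (p : ℝ) ^ 2 ≤ sin (π * d.val / p) ^ 2 := by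
    calc 4 / (p : ℝ) ^ 2 = (2 / p) ^ 2 := by ring
      _ ≤ _ := pow_le_pow_left₀ (by positivity) hsin 2
  rw [hre, cos_two_mul, cos_sq']
  linarith [show 8 / (p : ℝ) ^ 2 = 2 * (4 / p ^ 2) by ring]

lemma norm_sum_stdAddChar_sq (T : Finset (ZMod p)) :
    ‖∑ t ∈ T, stdAddChar t‖ ^ 2 = ∑ u ∈ T, ∑ v ∈ T, (stdAddChar (u - v)).re := by
  have hprod : (‖∑ t ∈ T, stdAddChar t‖ ^ 2 : ℂ) = ∑ u ∈ T, ∑ v ∈ T, stdAddChar (u - v) := by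
    simp_rw [← Complex.mul_conj', map_sum, sum_mul_sum, ← AddChar.map_neg_eq_conj,
      ← AddChar.map_add_eq_mul, ← sub_eq_add_neg]
  simp_rw [← Complex.re_sum, ← hprod]
  norm_cast

lemma norm_sum_stdAddChar_le {T : Finset (ZMod p)} (hT : 2 ≤ #T) :
    ‖∑ t ∈ T, stdAddChar t‖ ≤ (#T : ℝ) * (1 - ((p : ℝ)⁻¹) ^ 2) := by
  set q : ℝ := ((p : ℝ)⁻¹) ^ 2
  have hrow : ∀ u ∈ T, ∑ v ∈ T, (stdAddChar (u - v)).re ≤ 1 + ((#T : ℝ) - 1) * (1 - 8 * q) := by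
    intro u hu
    rw [← add_sum_erase _ _ hu, sub_self, AddChar.map_zero_eq_one, Complex.one_re]
    have hoff : ∀ v ∈ T.erase u, (stdAddChar (u - v)).re ≤ 1 - 8 * q := fun v hv => by
      simpa [q, div_eq_mul_inv, inv_pow] using
        re_stdAddChar_le (sub_ne_zero.2 (ne_of_mem_erase hv).symm)
    have := sum_le_card_nsmul _ _ _ hoff
    rw [card_erase_of_mem hu, nsmul_eq_mul, Nat.cast_pred (card_pos.2 ⟨u, hu⟩)] at this
    linarith
  have hm : (2 : ℝ) ≤ #T := by exact_mod_cast hT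
  have hq0 : 0 ≤ q := by positivity
  have hq1 : q ≤ 1 := pow_le_one₀ (by positivity) (inv_le_one_of_one_le₀ (by
    exact_mod_cast NeZero.one_le))
  have hsq : ‖∑ t ∈ T, stdAddChar t‖ ^ 2 ≤ ((#T : ℝ) * (1 - q)) ^ 2 :=
    calc ‖∑ t ∈ T, stdAddChar t‖ ^ 2 ≤ ∑ u ∈ T, (1 + ((#T : ℝ) - 1) * (1 - 8 * q)) := by
          rw [norm_sum_stdAddChar_sq]; exact sum_le_sum hrow
      _ = (#T : ℝ) * (1 + ((#T : ℝ) - 1) * (1 - 8 * q)) := by rw [sum_const, nsmul_eq_mul]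
      _ ≤ ((#T : ℝ) * (1 - q)) ^ 2 := by
          -- the right side minus the left side is `q * #T * (6 * #T - 8 + #T * q)`
          have : 0 ≤ q * #T * (6 * #T - 8 + #T * q) :=
            mul_nonneg (mul_nonneg hq0 (by linarith)) (by nlinarith)
          nlinarith
  exact (pow_le_pow_iff_left₀ (norm_nonneg _) (by nlinarith) two_ne_zero).1 hsq

lemma sum_stdAddChar_dotProduct {ι : Type*} [Fintype ι] [DecidableEq ι] (z : ι → ZMod p) :
    ∑ a : ι → ZMod p, stdAddChar (a ⬝ᵥ z) = if z = 0 then (p : ℂ) ^ Fintype.card ι else 0 := by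
  have hcoord : ∀ i, ∑ t : ZMod p, stdAddChar (t * z i) = if z i = 0 then (p : ℂ) else 0 := by
    intro i
    rw [AddChar.sum_mulShift _ (isPrimitive_stdAddChar p), card]
    split_ifs <;> simp
  simp_rw [dotProduct, AddChar.map_sum_eq_prod]
  rw [← Fintype.prod_sum (fun i t => stdAddChar (t * z i))]
  simp [hcoord, prod_ite_zero, funext_iff]

lemma sum_sum_stdAddChar_eq_card_filter_mul {ι κ : Type*} [Fintype ι] [Fintype κ] [DecidableEq κ]
    (X : Finset (ι → ZMod p)) (φ : Matrix κ ι (ZMod p)) (y : κ → ZMod p) :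
    ∑ a : κ → ZMod p, ∑ x ∈ X, stdAddChar (a ⬝ᵥ (φ *ᵥ x - y))
      = #{x ∈ X | φ *ᵥ x = y} * (p : ℂ) ^ Fintype.card κ := by
  rw [sum_comm]
  simp_rw [sum_stdAddChar_dotProduct, sub_eq_zero]
  rw [← sum_filter, sum_const, nsmul_eq_mul]

end NeZero

section Prime

variable {p : ℕ} [Fact p.Prime]

lemma norm_sum_stdAddChar_mul_le {S : Finset (ZMod p)} (hS : 2 ≤ #S) {c : ZMod p}
    (hc : c ≠ 0) : ‖∑ s ∈ S, stdAddChar (c * s)‖ ≤ (#S : ℝ) * (1 - ((p : ℝ)⁻¹) ^ 2) := by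
  have hinj : Set.InjOn (c * ·) S := (mul_right_injective₀ hc).injOn
  rw [← sum_image hinj, ← card_image_of_injOn hinj]
  exact norm_sum_stdAddChar_le (by rwa [card_image_of_injOn hinj])

lemma norm_sum_piFinset_stdAddChar_dotProduct_le {S : Finset (ZMod p)}
    (hS : 2 ≤ #S) {n : ℕ} (c : Fin n → ZMod p) :
    ‖∑ x ∈ Fintype.piFinset fun _ : Fin n => S, stdAddChar (c ⬝ᵥ x)‖
      ≤ (#S : ℝ) ^ n * (1 - ((p : ℝ)⁻¹) ^ 2) ^ #(supp c) := by
  have hfactor : ∑ x ∈ Fintype.piFinset (fun _ : Fin n => S), stdAddChar (c ⬝ᵥ x)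
      = ∏ i, ∑ s ∈ S, stdAddChar (c i * s) := by
    rw [prod_univ_sum]
    simp_rw [dotProduct, AddChar.map_sum_eq_prod]
  have hcoord : ∀ i, ‖∑ s ∈ S, stdAddChar (c i * s)‖
      ≤ (#S : ℝ) * if c i = 0 then 1 else 1 - ((p : ℝ)⁻¹) ^ 2 := by
    intro i
    split_ifs with hci
    · simp [hci]
    · exact norm_sum_stdAddChar_mul_le hS hci
  calc _ ≤ ∏ i, (#S : ℝ) * (if c i = 0 then 1 else 1 - ((p : ℝ)⁻¹) ^ 2) := by
        rw [hfactor, norm_prod]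
        exact prod_le_prod (fun _ _ => norm_nonneg _) (fun i _ => hcoord i)
    _ = _ := by
        rw [prod_mul_distrib, prod_const, card_univ, Fintype.card_fin, prod_ite, prod_const_one,
          one_mul, prod_const]
        rfl

lemma norm_card_filter_mulVec_eq_mul_sub_le {S : Finset (ZMod p)} (hS : 2 ≤ #S)
    {n k r : ℕ} (φ : Matrix (Fin k) (Fin n) (ZMod p))
    (hsep : ∀ a : Fin k → ZMod p, a ≠ 0 → r ≤ #(supp (a ᵥ* φ))) (y : Fin k → ZMod p) :
    ‖(#{x ∈ Fintype.piFinset fun _ : Fin n => S | φ *ᵥ x = y} : ℂ) * (p : ℂ) ^ k - (#S : ℂ) ^ n‖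
      ≤ (p : ℝ) ^ k * ((#S : ℝ) ^ n * (1 - ((p : ℝ)⁻¹) ^ 2) ^ r) := by
  set X := Fintype.piFinset fun _ : Fin n => S
  set γ : ℝ := 1 - ((p : ℝ)⁻¹) ^ 2
  have hγ0 : 0 ≤ γ := sub_nonneg.2 (pow_le_one₀ (by positivity)
    (inv_le_one_of_one_le₀ (by exact_mod_cast NeZero.one_le)))
  have hγ1 : γ ≤ 1 := sub_le_self _ (by positivity)
  have hterm : ∀ a, ‖∑ x ∈ X, stdAddChar (a ⬝ᵥ (φ *ᵥ x - y))‖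
      = ‖∑ x ∈ X, stdAddChar ((a ᵥ* φ) ⬝ᵥ x)‖ := by
    intro a
    simp_rw [dotProduct_sub, dotProduct_mulVec, sub_eq_add_neg, AddChar.map_add_eq_mul,
      ← sum_mul, norm_mul, AddChar.norm_apply, mul_one]
  have hbound : ∀ a ∈ univ.erase (0 : Fin k → ZMod p),
      ‖∑ x ∈ X, stdAddChar (a ⬝ᵥ (φ *ᵥ x - y))‖ ≤ (#S : ℝ) ^ n * γ ^ r := by
    intro a ha
    rw [hterm]
    exact (norm_sum_piFinset_stdAddChar_dotProduct_le hS _).trans <|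
      mul_le_mul_of_nonneg_left (pow_le_pow_of_le_one hγ0 hγ1 (hsep a (ne_of_mem_erase ha)))
        (by positivity)
  have hX : (#X : ℂ) = (#S : ℂ) ^ n := by simp [X]
  have hsum := sum_sum_stdAddChar_eq_card_filter_mul X φ y
  rw [Fintype.card_fin] at hsum
  rw [← hsum, ← add_sum_erase _ _ (mem_univ 0)]
  simp only [zero_dotProduct, AddChar.map_zero_eq_one, sum_const, nsmul_one, hX,
    add_sub_cancel_left]
  calc _ ≤ ∑ a ∈ univ.erase (0 : Fin k → ZMod p), ‖∑ x ∈ X, stdAddChar (a ⬝ᵥ (φ *ᵥ x - y))‖ :=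
        norm_sum_le _ _
    _ ≤ ∑ _a ∈ univ.erase (0 : Fin k → ZMod p), (#S : ℝ) ^ n * γ ^ r := sum_le_sum hbound
    _ ≤ ∑ _a : Fin k → ZMod p, (#S : ℝ) ^ n * γ ^ r :=
        sum_le_sum_of_subset_of_nonneg (erase_subset _ _) (fun _ _ _ => by positivity)
    _ = _ := by simp

lemma abs_card_filter_mulVec_eq_div_sub_le {S : Finset (ZMod p)} (hS : 2 ≤ #S)
    {n k r : ℕ} (φ : Matrix (Fin k) (Fin n) (ZMod p))
    (hsep : ∀ a : Fin k → ZMod p, a ≠ 0 → r ≤ #(supp (a ᵥ* φ))) (y : Fin k → ZMod p) :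
    |(#{x ∈ Fintype.piFinset fun _ : Fin n => S | φ *ᵥ x = y} : ℝ) / (#S : ℝ) ^ n
        - ((p : ℝ)⁻¹) ^ k| ≤ (1 - ((p : ℝ)⁻¹) ^ 2) ^ r := by
  set N := #{x ∈ Fintype.piFinset fun _ : Fin n => S | φ *ᵥ x = y}
  have hkey : |(N : ℝ) * p ^ k - #S ^ n| ≤ p ^ k * (#S ^ n * (1 - ((p : ℝ)⁻¹) ^ 2) ^ r) := by
    have := norm_card_filter_mulVec_eq_mul_sub_le hS φ hsep y
    rwa [show (N : ℂ) * p ^ k - #S ^ n = ((N * p ^ k - #S ^ n : ℝ) : ℂ) by push_cast; rfl,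
      Complex.norm_real, Real.norm_eq_abs] at this
  have hp0 : (0 : ℝ) < p := by exact_mod_cast (Fact.out : p.Prime).pos
  have hS0 : (0 : ℝ) < #S := by exact_mod_cast (show 0 < #S by omega)
  have hden : 0 < (p : ℝ) ^ k * #S ^ n := by positivity
  rw [show (N : ℝ) / #S ^ n - (p : ℝ)⁻¹ ^ k = (N * p ^ k - #S ^ n) / (p ^ k * #S ^ n) by
    rw [inv_pow]; field_simp, abs_div, abs_of_pos hden, div_le_iff₀ hden]
  linarith

end Prime

end ZMod

theorem stmt_0_general {p n : ℕ} (hp : p.Prime) (S : Finset (ZMod p)) (hS : 2 ≤ S.card)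
    (k r : ℕ) (φ : Fin k → Fin n → ZMod p)
    (hsep : ∀ a : Fin k → ZMod p, a ≠ 0 →
      r ≤ (supp fun i => ∑ j, a j * φ j i).card)
    (y : Fin k → ZMod p) :
    |(((Fintype.piFinset fun _ : Fin n => S).filter
          fun x => ∀ i, evalForm (φ i) x = y i).card : ℝ) / (S.card : ℝ) ^ n
        - ((p : ℝ)⁻¹) ^ k| ≤ (1 - ((p : ℝ)⁻¹) ^ 2) ^ r := by
  have := Fact.mk hp
  rw [filter_congr fun x _ => funext_iff.symm]
  exact ZMod.abs_card_filter_mulVec_eq_div_sub_le hS φ hsep y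

theorem stmt_0 {p n : ℕ} (hp : p.Prime) (S : Finset (ZMod p)) (hS : 2 ≤ S.card)
    (k r : ℕ) (hk : 1 ≤ k) (φ : Fin k → Fin n → ZMod p)
    (hsep : ∀ a : Fin k → ZMod p, a ≠ 0 →
      r ≤ (supp fun i => ∑ j, a j * φ j i).card)
    (y : Fin k → ZMod p) :
    |(((Fintype.piFinset fun _ : Fin n => S).filter
          fun x => ∀ i, evalForm (φ i) x = y i).card : ℝ) / (S.card : ℝ) ^ n
        - ((p : ℝ)⁻¹) ^ k| ≤ (1 - ((p : ℝ)⁻¹) ^ 2) ^ r :=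
  stmt_0_general hp S hS k r φ hsep y
end

section
/- Let p be a prime, let S be a subset of 𝔽_p with |S| ≥ 2, and let E be a nonempty strict subset of 𝔽_p. Set m = ⌊(|E| − 1)/(|S| − 1)⌋ + 1. Then for every choice of a₁, …, a_m ∈ 𝔽_p \ {0}, the sumset a₁S + a₂S + ⋯ + a_mS (the set of all sums a₁s₁ + ⋯ + a_ms_m with s₁, …, s_m ∈ S) is not contained in E. In particular L(S,E) ≤ ⌊(|E|−1)/(|S|−1)⌋ + 1. -/
open Finset

open Pointwise in
lemma sumsetSub_nonempty {p m : ℕ} (a : Fin m → ZMod p) {S : Finset (ZMod p)}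
    (hS : S.Nonempty) : (sumsetSub a S).Nonempty :=
  ((Fintype.piFinset_nonempty.2 fun _ => hS)).image _

open Pointwise in
lemma sumsetSub_succ {p k : ℕ} (a : Fin (k+1) → ZMod p) (S : Finset (ZMod p)) :
    sumsetSub a S = S.image (fun x => a 0 * x) + sumsetSub (fun i : Fin k => a i.succ) S := by
  ext x
  simp only [sumsetSub, Finset.mem_add, Finset.mem_image, Fintype.mem_piFinset]
  constructor
  · rintro ⟨s, hs, rfl⟩
    exact ⟨a 0 * s 0, ⟨s 0, hs 0, rfl⟩, ∑ i : Fin k, a i.succ * s i.succ,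
      ⟨fun i => s i.succ, fun i => hs _, rfl⟩, (Fin.sum_univ_succ fun i => a i * s i).symm⟩
  · rintro ⟨y, ⟨t, ht, rfl⟩, z, ⟨u, hu, rfl⟩, rfl⟩
    refine ⟨Fin.cons t u, fun i => ?_, ?_⟩
    · refine Fin.cases ?_ ?_ i <;> simp [ht, hu]
    · rw [Fin.sum_univ_succ]; simp

lemma card_sumsetSub {p : ℕ} (hp : p.Prime) {S : Finset (ZMod p)} (hS : S.Nonempty) :
    ∀ k (a : Fin k → ZMod p), (∀ i, a i ≠ 0) →
      min p (k * (S.card - 1) + 1) ≤ (sumsetSub a S).card := by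
  haveI := Fact.mk hp
  intro k
  induction k with
  | zero =>
    intro a _
    have : (sumsetSub a S).Nonempty := sumsetSub_nonempty a hS
    have := this.card_pos
    have : 1 ≤ p := hp.one_lt.le.trans' (by norm_num)
    omega
  | succ k ih =>
    intro a ha
    rw [sumsetSub_succ]
    have hinj : Set.InjOn (fun x => a 0 * x) S := fun x _ y _ h =>
      mul_left_cancel₀ (ha 0) h
    have hcard : (S.image fun x => a 0 * x).card = S.card := Finset.card_image_of_injOn hinj
    have h1 := ZMod.cauchy_davenport hp (hS.image fun x => a 0 * x)
      (sumsetSub_nonempty (fun i : Fin k => a i.succ) hS)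
    have h2 := ih (fun i => a i.succ) (fun i => ha _)
    have hSc : 1 ≤ S.card := hS.card_pos
    have hexp : (k+1) * (S.card - 1) = k * (S.card - 1) + (S.card - 1) := by ring
    omega

theorem stmt_2 {p : ℕ} (hp : p.Prime) [NeZero p] (S E : Finset (ZMod p)) (hS : 2 ≤ S.card)
    (hEne : E.Nonempty) (hE : E ⊂ Finset.univ) :
    (∀ a : Fin ((E.card - 1) / (S.card - 1) + 1) → ZMod p, (∀ i, a i ≠ 0) →
      ¬ sumsetSub a S ⊆ E) ∧
    LSE S E ≤ (E.card - 1) / (S.card - 1) + 1 := by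
  have hSne : S.Nonempty := Finset.card_pos.1 (by omega)
  have hEp : E.card < p := by
    have := Finset.card_lt_card hE
    simpa [ZMod.card p] using this
  have key : ∀ a : Fin ((E.card - 1) / (S.card - 1) + 1) → ZMod p, (∀ i, a i ≠ 0) →
      ¬ sumsetSub a S ⊆ E := by
    intro a ha hsub
    have h1 := card_sumsetSub hp hSne _ a ha
    have h2 := Finset.card_le_card hsub
    have h3 := Nat.div_add_mod (E.card - 1) (S.card - 1)
    have h4 : (E.card - 1) % (S.card - 1) < S.card - 1 := Nat.mod_lt _ (by omega)
    have h5 : ((E.card - 1) / (S.card - 1) + 1) * (S.card - 1)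
        = (S.card - 1) * ((E.card - 1) / (S.card - 1)) + (S.card - 1) := by ring
    have hE1 : 1 ≤ E.card := hEne.card_pos
    omega
  exact ⟨key, Nat.sInf_le key⟩
end

section
/- Let p be a prime, let S be a subset of 𝔽_p with |S| ≥ 2, and let φ : 𝔽_p^n → 𝔽_p be a mod-p form. Then for every y ∈ 𝔽_p, either ℙ_{x∈S^n}(φ(x) = y) = 0 or ℙ_{x∈S^n}(φ(x) = y) ≥ β(p,S), where β(p,S) = |S|^{−⌈(p−1)/(|S|−1)⌉}. -/
open Finset

/-!
Let `m = ⌈(p-1)/(|S|-1)⌉`. If the level set `{x ∈ Sⁿ | φ x = y}` is nonempty, there is a set `T`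
of at most `m` coordinates such that every point of `Sⁿ` can be moved into the level set by
changing only its `T`-coordinates. If `φ` has at least `m` nonzero coefficients, take `T` to be `m`
of them: by Cauchy–Davenport the sumset `∑_{i ∈ T} φᵢ • S` has at least
`min p (m (|S|-1) + 1) = p` elements, so it is all of `𝔽_p`. Otherwise take `T = supp φ`, on which
alone `φ` depends. Hence the level set has at least `|S|^(n-m)` points.
-/

open Fintype (piFinset mem_piFinset card_piFinset piFinset_nonempty)
open Pointwise

section CauchyDavenport

variable {ι : Type*} [Fintype ι] [DecidableEq ι] {p : ℕ}

lemma image_piFinset_sum_insert (S : Finset (ZMod p)) (a : ι → ZMod p) {T : Finset ι} {j : ι}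
    (hj : j ∉ T) :
    ((piFinset fun _ : ι => S).image fun x => ∑ i ∈ insert j T, a i * x i) =
      a j • S + (piFinset fun _ : ι => S).image fun x => ∑ i ∈ T, a i * x i := by
  ext c
  simp only [mem_image, mem_add, mem_smul_finset, mem_piFinset, smul_eq_mul]
  constructor
  · rintro ⟨x, hx, rfl⟩
    exact ⟨_, ⟨x j, hx j, rfl⟩, _, ⟨x, hx, rfl⟩, by rw [sum_insert hj]⟩
  · rintro ⟨_, ⟨s, hs, rfl⟩, _, ⟨x, hx, rfl⟩, rfl⟩
    refine ⟨Function.update x j s, fun i => ?_, ?_⟩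
    · rcases eq_or_ne i j with rfl | hne
      · simpa using hs
      · simpa [hne] using hx i
    · rw [sum_insert hj, Function.update_self]
      congr 1
      exact sum_congr rfl fun i hi => by rw [Function.update_of_ne (ne_of_mem_of_not_mem hi hj)]

lemma min_le_card_image_piFinset_sum (hp : p.Prime) {S : Finset (ZMod p)} (hS : S.Nonempty)
    (a : ι → ZMod p) (T : Finset ι) (hT : ∀ i ∈ T, a i ≠ 0) :
    min p (#T * (#S - 1) + 1) ≤
      #((piFinset fun _ : ι => S).image fun x => ∑ i ∈ T, a i * x i) := by
  have := Fact.mk hp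
  have hpi : (piFinset fun _ : ι => S).Nonempty := piFinset_nonempty.2 fun _ => hS
  induction T using Finset.induction with
  | empty =>
    simp only [card_empty, zero_mul, zero_add]
    exact (min_le_right _ _).trans (card_pos.2 (hpi.image _))
  | @insert j T hj ih =>
    have ih := ih fun i hi => hT i (mem_insert_of_mem hi)
    have hcd := ZMod.cauchy_davenport hp (hS.smul_finset (a := a j))
      (hpi.image fun x => ∑ i ∈ T, a i * x i)
    rw [← image_piFinset_sum_insert S a hj, card_smul_finset₀ (hT j (mem_insert_self j T))]
      at hcd
    rw [card_insert_of_notMem hj, add_one_mul]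
    have := hS.card_pos
    omega

lemma exists_mem_piFinset_sum_eq (hp : p.Prime) {S : Finset (ZMod p)} (hS : S.Nonempty)
    (a : ι → ZMod p) (T : Finset ι) (hT : ∀ i ∈ T, a i ≠ 0)
    (hcard : p ≤ #T * (#S - 1) + 1) (c : ZMod p) :
    ∃ x ∈ piFinset fun _ : ι => S, ∑ i ∈ T, a i * x i = c := by
  have := Fact.mk hp
  have hfull := min_le_card_image_piFinset_sum hp hS a T hT
  rw [min_eq_left hcard] at hfull
  have himg : ((piFinset fun _ : ι => S).image fun x => ∑ i ∈ T, a i * x i) = univ :=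
    eq_univ_of_card _ ((card_le_univ _).antisymm (by rwa [ZMod.card]))
  exact mem_image.1 (himg ▸ mem_univ c)

end CauchyDavenport

lemma card_pow_le_card_filter_of_forall_exists_eqOn_compl {ι α : Type*} [Fintype ι] [DecidableEq ι]
    {S : Finset α} (hS : S.Nonempty) (P : (ι → α) → Prop) [DecidablePred P] (T : Finset ι)
    (h : ∀ z ∈ piFinset fun _ : ι => S,
      ∃ x ∈ piFinset fun _ : ι => S, P x ∧ Set.EqOn x z (↑T)ᶜ) :
    #S ^ (Fintype.card ι - #T) ≤ #((piFinset fun _ : ι => S).filter P) := by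
  obtain ⟨s₀, hs₀⟩ := hS
  classical
  let U := piFinset fun i : ι => if i ∈ T then {s₀} else S
  have hU : #U = #S ^ (Fintype.card ι - #T) := by
    rw [card_piFinset, ← prod_mul_prod_compl T, ← card_compl,
      prod_eq_one fun i hi => by rw [if_pos hi, card_singleton], one_mul,
      prod_congr rfl fun i hi => congrArg card (if_neg (mem_compl.1 hi)), prod_const]
  have hsub :
      U ⊆ ((piFinset fun _ : ι => S).filter P).image fun x => T.piecewise (fun _ => s₀) x := by
    intro z hz
    rw [mem_piFinset] at hz
    obtain ⟨x, hx, hPx, hxz⟩ := h z (mem_piFinset.2 fun i => by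
      have := hz i; split_ifs at this <;> simp_all)
    refine mem_image.2 ⟨x, mem_filter.2 ⟨hx, hPx⟩, funext fun i => ?_⟩
    by_cases hi : i ∈ T
    · simpa [hi, eq_comm] using hz i
    · simp [hi, hxz hi]
  exact hU ▸ (card_le_card hsub).trans card_image_le

section Forms

variable {p n : ℕ}

lemma evalForm_piecewise (φ v z : Fin n → ZMod p) (T : Finset (Fin n)) :
    evalForm φ (T.piecewise v z) = ∑ i ∈ T, φ i * v i + ∑ i ∈ Tᶜ, φ i * z i := by
  rw [evalForm, ← sum_add_sum_compl T]
  congr 1 <;> refine sum_congr rfl fun i hi => ?_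
  · rw [T.piecewise_eq_of_mem _ _ hi]
  · rw [T.piecewise_eq_of_notMem _ _ (mem_compl.1 hi)]

lemma evalForm_piecewise_of_supp_subset {φ : Fin n → ZMod p} {T : Finset (Fin n)}
    (hT : supp φ ⊆ T) (w z : Fin n → ZMod p) : evalForm φ (T.piecewise w z) = evalForm φ w := by
  have hzero : ∀ u : Fin n → ZMod p, ∑ i ∈ Tᶜ, φ i * u i = 0 := fun u =>
    sum_eq_zero fun i hi => by
      have : i ∉ supp φ := fun h => mem_compl.1 hi (hT h)
      simp_all [supp]
  conv_rhs => rw [← T.piecewise_same w]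
  rw [evalForm_piecewise, evalForm_piecewise, hzero, hzero]

lemma exists_evalForm_piecewise_eq (hp : p.Prime) {S : Finset (ZMod p)} (hS : S.Nonempty)
    {φ : Fin n → ZMod p} {T : Finset (Fin n)} (hT : T ⊆ supp φ)
    (hcard : p ≤ #T * (#S - 1) + 1) (z : Fin n → ZMod p) (y : ZMod p) :
    ∃ v ∈ piFinset fun _ : Fin n => S, evalForm φ (T.piecewise v z) = y := by
  obtain ⟨v, hv, hvy⟩ := exists_mem_piFinset_sum_eq hp hS φ T
    (fun i hi => (mem_filter.1 (hT hi)).2) hcard (y - ∑ i ∈ Tᶜ, φ i * z i)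
  exact ⟨v, hv, by rw [evalForm_piecewise, hvy, sub_add_cancel]⟩

lemma le_ceil_div_mul_add_one (p s : ℕ) (hs : 2 ≤ s) :
    p ≤ ⌈((p : ℝ) - 1) / ((s : ℝ) - 1)⌉₊ * (s - 1) + 1 := by
  have hs' : (0 : ℝ) < (s : ℝ) - 1 := by
    have : (2 : ℝ) ≤ s := by exact_mod_cast hs
    linarith
  have hceil := (div_le_iff₀ hs').1 (Nat.le_ceil (((p : ℝ) - 1) / ((s : ℝ) - 1)))
  have : (p : ℝ) ≤ ((⌈((p : ℝ) - 1) / ((s : ℝ) - 1)⌉₊ * (s - 1) + 1 : ℕ) : ℝ) := by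
    push_cast [Nat.cast_sub (by omega : 1 ≤ s)]
    linarith
  exact_mod_cast this

lemma exists_card_le_ceil_forall_exists_eqOn_compl (hp : p.Prime) {S : Finset (ZMod p)}
    (hS : 2 ≤ #S) (φ : Fin n → ZMod p) {y : ZMod p} {w : Fin n → ZMod p}
    (hw : w ∈ piFinset fun _ : Fin n => S) (hwy : evalForm φ w = y) :
    ∃ T : Finset (Fin n), #T ≤ ⌈((p : ℝ) - 1) / ((#S : ℝ) - 1)⌉₊ ∧
      ∀ z ∈ piFinset fun _ : Fin n => S,
        ∃ x ∈ piFinset fun _ : Fin n => S, evalForm φ x = y ∧ Set.EqOn x z (↑T)ᶜ := by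
  suffices ∃ T : Finset (Fin n), #T ≤ ⌈((p : ℝ) - 1) / ((#S : ℝ) - 1)⌉₊ ∧
      ∀ z ∈ piFinset fun _ : Fin n => S,
        ∃ v ∈ piFinset fun _ : Fin n => S, evalForm φ (T.piecewise v z) = y by
    obtain ⟨T, hTm, hT⟩ := this
    refine ⟨T, hTm, fun z hz => ?_⟩
    obtain ⟨v, hv, hvy⟩ := hT z hz
    refine ⟨T.piecewise v z, mem_piFinset.2 fun i => ?_, hvy,
      fun i hi => T.piecewise_eq_of_notMem _ _ hi⟩
    by_cases hi : i ∈ T <;> simp [hi, mem_piFinset.1 hv i, mem_piFinset.1 hz i]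
  rcases le_total ⌈((p : ℝ) - 1) / ((#S : ℝ) - 1)⌉₊ #(supp φ) with hm | hm
  · obtain ⟨T, hTsupp, hTm⟩ := exists_subset_card_eq hm
    refine ⟨T, hTm.le, fun z _ => exists_evalForm_piecewise_eq hp ?_ hTsupp ?_ z y⟩
    · exact card_pos.1 (by omega)
    · exact hTm ▸ le_ceil_div_mul_add_one p #S hS
  · exact ⟨supp φ, hm, fun z _ => ⟨w, hw, by rw [evalForm_piecewise_of_supp_subset le_rfl, hwy]⟩⟩

end Forms

theorem stmt_6 {p n : ℕ} (hp : p.Prime) (S : Finset (ZMod p)) (hS : 2 ≤ S.card)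
    (φ : Fin n → ZMod p) (y : ZMod p) :
    (((Fintype.piFinset fun _ : Fin n => S).filter
        fun x => evalForm φ x = y).card : ℝ) / (S.card : ℝ) ^ n = 0 ∨
    betaPS p S ≤ (((Fintype.piFinset fun _ : Fin n => S).filter
        fun x => evalForm φ x = y).card : ℝ) / (S.card : ℝ) ^ n := by
  rcases ((piFinset fun _ : Fin n => S).filter fun x => evalForm φ x = y).eq_empty_or_nonempty
    with hF | ⟨w, hw⟩
  · left
    simp [hF]
  right
  rw [mem_filter] at hw
  obtain ⟨T, hTm, hT⟩ := exists_card_le_ceil_forall_exists_eqOn_compl hp hS φ hw.1 hw.2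
  have hcount := card_pow_le_card_filter_of_forall_exists_eqOn_compl (card_pos.1 (by omega)) _ T hT
  rw [Fintype.card_fin] at hcount
  have hTn : #T ≤ n := by simpa using card_le_univ T
  have hS1 : (1 : ℝ) ≤ #S := by exact_mod_cast (by omega : 1 ≤ #S)
  rw [betaPS, le_div_iff₀ (by positivity), inv_mul_le_iff₀ (by positivity)]
  calc (#S : ℝ) ^ n = (#S : ℝ) ^ #T * #S ^ (n - #T) := by rw [← pow_add, Nat.add_sub_cancel' hTn]
    _ ≤ _ := by
      gcongr
      exact_mod_cast hcount
end

section
/- Let p be a prime, let S be a subset of 𝔽_p with |S| ≥ 2, let E be a strict subset of 𝔽_p, and suppose a₁, …, a_m ∈ 𝔽_p \ {0} (m ≥ 1) satisfy a₁S + ⋯ + a_mS ⊆ E. Then for every integer k ≥ 1 there exist n (one may take n = mk) and mod-p forms φ₁, …, φ_k : 𝔽_p^n → 𝔽_p such that |Z(φ_j − φ_i)| = 2m for all 1 ≤ i < j ≤ k, and φ_i(x) ∈ E for every x ∈ S^n and every i ∈ [k]. (With m = L(S,E) − 1, this shows the lower bound 2L(S,E) − 1 in the hypothesis of the main theorem cannot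 be decreased.) -/
open Finset

theorem stmt_7 {p : ℕ} (hp : p.Prime) [NeZero p] (S E : Finset (ZMod p)) (hS : 2 ≤ S.card)
    (hE : E ⊂ Finset.univ) (m : ℕ) (hm : 1 ≤ m) (a : Fin m → ZMod p)
    (ha : ∀ i, a i ≠ 0) (hsub : sumsetSub a S ⊆ E) (k : ℕ) (hk : 1 ≤ k) :
    ∃ (n : ℕ) (φ : Fin k → Fin n → ZMod p),
      (∀ i j : Fin k, i < j → (supp fun z => φ j z - φ i z).card = 2 * m) ∧
      ∀ x ∈ Fintype.piFinset fun _ : Fin n => S, ∀ i, evalForm (φ i) x ∈ E := by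
  refine ⟨k * m, fun i z => if (finProdFinEquiv.symm z).1 = i then a (finProdFinEquiv.symm z).2 else 0, ?_, ?_⟩
  · intro i j hij
    have hne : i ≠ j := ne_of_lt hij
    have hset : (supp fun z => (if (finProdFinEquiv.symm z).1 = j then
          a (finProdFinEquiv.symm z).2 else 0) -
          (if (finProdFinEquiv.symm z).1 = i then a (finProdFinEquiv.symm z).2 else 0)) =
        (({i, j} : Finset (Fin k)) ×ˢ (univ : Finset (Fin m))).map
          (finProdFinEquiv : Fin k × Fin m ≃ Fin (k * m)).toEmbedding := by
      ext z
      simp only [supp, mem_filter, mem_univ, true_and, Finset.mem_map_equiv, mem_product,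
        mem_insert, mem_singleton, and_true]
      rcases hw : (finProdFinEquiv.symm z : Fin k × Fin m) with ⟨c, r⟩
      by_cases hci : c = i <;> by_cases hcj : c = j <;>
        simp_all [sub_eq_zero, ha, (ha r).symm]
    beta_reduce
    rw [hset, Finset.card_map, Finset.card_product, Finset.card_univ, Fintype.card_fin]
    rw [Finset.card_insert_of_notMem (by simpa using hne), Finset.card_singleton]
  · intro x hx i
    have hxS : ∀ z, x z ∈ S := by simpa [Fintype.mem_piFinset] using hx
    apply hsub
    simp only [sumsetSub, mem_image]
    refine ⟨fun r => x (finProdFinEquiv (i, r)), by simp [Fintype.mem_piFinset, hxS], ?_⟩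
    unfold evalForm
    rw [← Fintype.sum_equiv (finProdFinEquiv : Fin k × Fin m ≃ Fin (k * m))
      (fun w => (if w.1 = i then a w.2 else 0) * x (finProdFinEquiv w)) _ (fun w => by
        simp [Equiv.symm_apply_apply])]
    rw [Fintype.sum_prod_type]
    rw [Finset.sum_eq_single i]
    · simp
    · intro b _ hb; simp [hb]
    · simp
end

section
/- Let p be a prime and let r, t ≥ 1 be integers, and set k = p^t. Then there exist n (one may take n = rt) and mod-p forms φ₁, …, φ_k : 𝔽_p^n → 𝔽_p, pairwise distinct, satisfying |Z(φ_j − φ_i)| ≥ r for all 1 ≤ i < j ≤ k, such that the density inside {0,1}^n of the set {x ∈ {0,1}^n : φ₁(x) = 0, …, φ_k(x) = 0} is at least 2^{−(p−1)t}, i.e. at least k^{−a} with a = (p−1)·log 2 / log p. -/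
/-
The forms are indexed by `w ∈ 𝔽_p^t`: split the `n = t r` coordinates into `t` blocks of size `r`
and let `φ_w(x) = ∑_j w_j (∑_{s ∈ block j} x_s)`. Then `φ_w - φ_v = φ_{w - v}` is supported on the
union of the blocks where `w` and `v` differ, so on at least `r` coordinates. Taking `w = e_j`
shows that the common zero set in `{0,1}^n` is the set of `x` whose every block contains a multiple
of `p` many ones, a product of `t` copies of the corresponding set `Z_r ⊆ {0,1}^r`. Finally
`|Z_r| ≥ 2^(r-(p-1))`: the number of subsets of an `m`-set with size `≡ c (mod p)` satisfies the
Pascal recursion `N(m+1, c) = N(m, c) + N(m, c-1)` and is positive for every `c` once `m ≥ p - 1`.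
-/

open Finset

def binaryCube (ι : Type*) [Fintype ι] [DecidableEq ι] (p : ℕ) : Finset (ι → ZMod p) :=
  Fintype.piFinset fun _ => {0, 1}

section PowersetMod

variable {α : Type*} {p : ℕ}

def powersetModCard (s : Finset α) (c : ZMod p) : Finset (Finset α) :=
  {A ∈ s.powerset | (#A : ZMod p) = c}

lemma card_powersetModCard_insert [DecidableEq α] {s : Finset α} {a : α} (ha : a ∉ s)
    (c : ZMod p) :
    #(powersetModCard (insert a s) c) =
      #(powersetModCard s c) + #(powersetModCard s (c - 1)) := by
  have hinj : Set.InjOn (insert a) (powersetModCard s (c - 1) : Set (Finset α)) :=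
    fun A hA B hB h => by
      simp only [powersetModCard, coe_filter, mem_powerset, Set.mem_ofPred_eq] at hA hB
      rw [← erase_insert (notMem_mono hA.1 ha), h, erase_insert (notMem_mono hB.1 ha)]
  rw [← card_image_of_injOn hinj, ← card_union_of_disjoint]
  · congr 1
    ext A
    simp only [powersetModCard, powerset_insert, mem_filter, mem_union, mem_image, mem_powerset]
    constructor
    · rintro ⟨hA | ⟨B, hB, rfl⟩, hc⟩
      · exact Or.inl ⟨hA, hc⟩
      · rw [card_insert_of_notMem (notMem_mono hB ha), Nat.cast_succ] at hc
        exact Or.inr ⟨B, ⟨hB, eq_sub_of_add_eq hc⟩, rfl⟩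
    · rintro (hA | ⟨B, ⟨hB, hc⟩, rfl⟩)
      · exact ⟨Or.inl hA.1, hA.2⟩
      · refine ⟨Or.inr ⟨B, hB, rfl⟩, ?_⟩
        rw [card_insert_of_notMem (notMem_mono hB ha), Nat.cast_succ, hc, sub_add_cancel]
  · rw [disjoint_left]
    intro A hA hA'
    obtain ⟨B, -, rfl⟩ := mem_image.1 hA'
    exact ha (mem_powerset.1 (mem_filter.1 hA).1 (mem_insert_self a B))

lemma two_pow_le_mul_card_powersetModCard_of_nonempty {s : Finset α} {c : ZMod p} {k : ℕ}
    (hk : k ≤ p - 1) (hc : (powersetModCard s c).Nonempty) :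
    2 ^ k ≤ 2 ^ (p - 1) * #(powersetModCard s c) :=
  (Nat.pow_le_pow_right two_pos hk).trans (Nat.le_mul_of_pos_right _ hc.card_pos)

lemma powersetModCard_nonempty [NeZero p] {s : Finset α} (hs : p - 1 ≤ #s) (c : ZMod p) :
    (powersetModCard s c).Nonempty := by
  obtain ⟨A, hAs, hA⟩ := exists_subset_card_eq (s := s) (n := c.val)
    (by have := ZMod.val_lt c; omega)
  exact ⟨A, mem_filter.2 ⟨mem_powerset.2 hAs, by rw [hA, ZMod.natCast_zmod_val]⟩⟩

lemma two_pow_card_le_mul_card_powersetModCard [NeZero p] [DecidableEq α] (s : Finset α)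
    (hs : p - 1 ≤ #s) (c : ZMod p) :
    2 ^ #s ≤ 2 ^ (p - 1) * #(powersetModCard s c) := by
  induction s using Finset.induction_on generalizing c with
  | empty =>
    exact two_pow_le_mul_card_powersetModCard_of_nonempty (Nat.zero_le _)
      (powersetModCard_nonempty hs c)
  | insert a s ha ih =>
    by_cases hs' : p - 1 ≤ #s
    · rw [card_powersetModCard_insert ha, card_insert_of_notMem ha, pow_succ, mul_two, mul_add]
      exact add_le_add (ih hs' c) (ih hs' (c - 1))
    · exact two_pow_le_mul_card_powersetModCard_of_nonempty
        (by rw [card_insert_of_notMem ha]; omega) (powersetModCard_nonempty hs c)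

lemma two_pow_card_le_mul_card_powersetModCard_zero [NeZero p] [DecidableEq α] (s : Finset α) :
    2 ^ #s ≤ 2 ^ (p - 1) * #(powersetModCard s (0 : ZMod p)) := by
  by_cases hs : p - 1 ≤ #s
  · exact two_pow_card_le_mul_card_powersetModCard s hs 0
  · exact two_pow_le_mul_card_powersetModCard_of_nonempty (by omega)
      ⟨∅, by simp [powersetModCard]⟩

end PowersetMod

section BinaryCube

variable {p : ℕ} {ι : Type*} [Fintype ι] [DecidableEq ι]

lemma ite_eq_one_of_mem_binaryCube {v : ι → ZMod p} (hv : v ∈ binaryCube ι p) (i : ι) :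
    (if v i = 1 then 1 else 0) = v i := by
  have : v i = 0 ∨ v i = 1 := by simpa using Fintype.mem_piFinset.1 hv i
  rcases this with h | h <;> simp [h, eq_comm]

lemma card_filter_binaryCube_sum_eq [Nontrivial (ZMod p)] (c : ZMod p) :
    #{v ∈ binaryCube ι p | ∑ i, v i = c} = #(powersetModCard (univ : Finset ι) c) := by
  refine card_nbij' (fun v => ({i | v i = 1} : Finset ι))
    (fun A i => if i ∈ A then 1 else 0) ?_ ?_ ?_ ?_
  · intro v hv
    simp only [coe_filter, Set.mem_ofPred_eq] at hv
    simp only [powersetModCard, coe_filter, mem_powerset, subset_univ, true_and, Set.mem_ofPred_eq]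
    rw [← hv.2, ← sum_boole]
    exact sum_congr rfl fun i _ => ite_eq_one_of_mem_binaryCube hv.1 i
  · intro A hA
    simp only [powersetModCard, coe_filter, mem_powerset, subset_univ, true_and,
      Set.mem_ofPred_eq] at hA
    simpa [binaryCube, hA] using fun i => em' (i ∈ A)
  · intro v hv
    funext i
    simp only [coe_filter, Set.mem_ofPred_eq] at hv
    simp only [mem_filter, mem_univ, true_and]
    exact ite_eq_one_of_mem_binaryCube hv.1 i
  · intro A hA
    ext i
    simp

end BinaryCube

section BlockForm

variable {p n : ℕ} {ι κ : Type*}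

def blockForm (e : Fin n ≃ ι × κ) (w : ι → ZMod p) : Fin n → ZMod p :=
  fun z => w (e z).1

lemma blockForm_sub (e : Fin n ≃ ι × κ) (w v : ι → ZMod p) :
    blockForm e (w - v) = fun z => blockForm e w z - blockForm e v z := rfl

lemma blockForm_injective [Nonempty κ] (e : Fin n ≃ ι × κ) :
    Function.Injective (blockForm (p := p) e) := by
  intro w v h
  funext i
  simpa [blockForm] using congrFun h (e.symm (i, Classical.arbitrary κ))

lemma card_supp_blockForm [Fintype ι] [Fintype κ] [DecidableEq ι] [DecidableEq κ]
    (e : Fin n ≃ ι × κ) (w : ι → ZMod p) :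
    #(supp (blockForm e w)) = #{i | w i ≠ 0} * Fintype.card κ := by
  rw [← card_univ, ← card_product]
  exact card_equiv e fun z => by rw [supp, mem_filter]; simp [blockForm]

lemma evalForm_blockForm [Fintype ι] [Fintype κ] (e : Fin n ≃ ι × κ) (w : ι → ZMod p)
    (x : Fin n → ZMod p) :
    evalForm (blockForm e w) x = ∑ i, w i * ∑ k, x (e.symm (i, k)) := by
  simp only [evalForm, blockForm, mul_sum]
  rw [← Fintype.sum_prod_type', ← e.symm.sum_comp]
  simp

lemma forall_evalForm_blockForm_eq_zero_iff [Fintype ι] [Fintype κ] [DecidableEq ι]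
    (e : Fin n ≃ ι × κ) (x : Fin n → ZMod p) :
    (∀ w, evalForm (blockForm e w) x = 0) ↔ ∀ i, ∑ k, x (e.symm (i, k)) = 0 := by
  simp only [evalForm_blockForm]
  refine ⟨fun h i => ?_, fun h w => sum_eq_zero fun i _ => by rw [h i, mul_zero]⟩
  simpa [Pi.single_apply] using h (Pi.single i 1)

end BlockForm

lemma card_filter_binaryCube_forall_sum_eq_zero {p : ℕ} {α ι κ : Type*} [Fintype α]
    [DecidableEq α] [Fintype ι] [DecidableEq ι] [Fintype κ] [DecidableEq κ] (e : α ≃ ι × κ) :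
    #{x ∈ binaryCube α p | ∀ i, ∑ k, x (e.symm (i, k)) = 0} =
      #{v ∈ binaryCube κ p | ∑ k, v k = 0} ^ Fintype.card ι := by
  rw [← card_univ (α := ι), ← prod_const, ← Fintype.card_piFinset]
  refine card_equiv ((e.arrowCongr (Equiv.refl _)).trans (Equiv.curry _ _ _)) fun x => ?_
  simp [binaryCube, forall_and, e.symm.surjective.forall]

lemma two_pow_card_le_mul_card_filter_binaryCube_sum_eq_zero {p : ℕ} [NeZero p]
    [Nontrivial (ZMod p)] (ι : Type*) [Fintype ι] [DecidableEq ι] :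
    2 ^ Fintype.card ι ≤ 2 ^ (p - 1) * #{v ∈ binaryCube ι p | ∑ i, v i = 0} := by
  rw [card_filter_binaryCube_sum_eq, ← card_univ]
  exact two_pow_card_le_mul_card_powersetModCard_zero univ

lemma inv_two_pow_le_pow_div_two_pow {a r t N : ℕ} (h : 2 ^ r ≤ 2 ^ a * N) :
    ((2 : ℝ) ^ (a * t))⁻¹ ≤ ((N ^ t : ℕ) : ℝ) / 2 ^ (t * r) := by
  rw [le_div_iff₀ (by positivity), inv_mul_le_iff₀ (by positivity)]
  have : 2 ^ (t * r) ≤ 2 ^ (a * t) * N ^ t := by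
    rw [pow_mul' 2 t r, pow_mul 2 a t, ← mul_pow]
    exact Nat.pow_le_pow_left h t
  exact_mod_cast this

theorem stmt_8_general {p : ℕ} (hp : p.Prime) (r t : ℕ) (hr : 1 ≤ r) :
    ∃ (n : ℕ) (φ : Fin (p ^ t) → Fin n → ZMod p),
      (∀ i j : Fin (p ^ t), i ≠ j → φ i ≠ φ j) ∧
      (∀ i j : Fin (p ^ t), i < j → r ≤ (supp fun z => φ j z - φ i z).card) ∧
      ((2 : ℝ) ^ ((p - 1) * t))⁻¹ ≤
        (((Fintype.piFinset fun _ : Fin n => ({0, 1} : Finset (ZMod p))).filter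
            fun x => ∀ i, evalForm (φ i) x = 0).card : ℝ) / (2 : ℝ) ^ n := by
  have : Fact p.Prime := ⟨hp⟩
  have : Nonempty (Fin r) := ⟨⟨0, hr⟩⟩
  let E : (Fin t → ZMod p) ≃ Fin (p ^ t) := Fintype.equivFinOfCardEq (by simp [ZMod.card])
  let e : Fin (t * r) ≃ Fin t × Fin r := finProdFinEquiv.symm
  refine ⟨t * r, fun i => blockForm e (E.symm i), fun i j hij => ?_, fun i j hij => ?_, ?_⟩
  · exact ((blockForm_injective e).comp E.symm.injective).ne hij
  · have hne : E.symm j - E.symm i ≠ 0 := sub_ne_zero.2 (E.symm.injective.ne hij.ne')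
    rw [← blockForm_sub, card_supp_blockForm, Fintype.card_fin]
    obtain ⟨j₀, hj₀⟩ := Function.ne_iff.1 hne
    exact Nat.le_mul_of_pos_left r (card_pos.2 ⟨j₀, by simpa using hj₀⟩)
  · have hzero : ∀ x : Fin (t * r) → ZMod p,
        (∀ i, evalForm (blockForm e (E.symm i)) x = 0) ↔ ∀ j, ∑ s, x (e.symm (j, s)) = 0 :=
      fun x => E.symm.surjective.forall.symm.trans (forall_evalForm_blockForm_eq_zero_iff e x)
    have hcount :
        #{x ∈ binaryCube (Fin (t * r)) p | ∀ i, evalForm (blockForm e (E.symm i)) x = 0} =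
          #{v ∈ binaryCube (Fin r) p | ∑ s, v s = 0} ^ t := by
      rw [filter_congr fun x _ => hzero x]
      -- `convert`, not `rw`: here `∀ j : Fin t` is decided by `Nat.decidableForallFin`,
      -- in the lemma by `Fintype.decidableForallFintype`.
      convert card_filter_binaryCube_forall_sum_eq_zero e
      exact (Fintype.card_fin t).symm
    rw [← binaryCube, hcount]
    exact inv_two_pow_le_pow_div_two_pow
      (by simpa using two_pow_card_le_mul_card_filter_binaryCube_sum_eq_zero (p := p) (Fin r))

theorem stmt_8 {p : ℕ} (hp : p.Prime) (r t : ℕ) (hr : 1 ≤ r) (ht : 1 ≤ t) :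
    ∃ (n : ℕ) (φ : Fin (p ^ t) → Fin n → ZMod p),
      (∀ i j : Fin (p ^ t), i ≠ j → φ i ≠ φ j) ∧
      (∀ i j : Fin (p ^ t), i < j → r ≤ (supp fun z => φ j z - φ i z).card) ∧
      ((2 : ℝ) ^ ((p - 1) * t))⁻¹ ≤
        (((Fintype.piFinset fun _ : Fin n => ({0, 1} : Finset (ZMod p))).filter
            fun x => ∀ i, evalForm (φ i) x = 0).card : ℝ) / (2 : ℝ) ^ n :=
  stmt_8_general hp r t hr
end

section
/- Let p ≥ 3 be a prime, let r ≥ 1 be an integer, and let ε > 0. Then for every sufficiently large integer k there exist n and r-separated mod-p forms φ₁, …, φ_k : 𝔽_p^n → 𝔽_p such that the density inside {0,1}^n of the set {x ∈ {0,1}^n : φ₁(x) ∈ {0,1}, …, φ_k(x) ∈ {0,1}} is at least k^{−((1+ε)·log 2/log p)·r}. In particular, no fixed separation level r forces this density to decay exponentially in the number of conditions. -/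
open Finset

lemma supp_append_card {p k s : ℕ} (u : Fin k → ZMod p) (v : Fin s → ZMod p) :
    (supp (Fin.append u v)).card = (supp u).card + (supp v).card := by
  classical
  simp only [supp, Finset.card_filter]
  rw [Fin.sum_univ_add]
  congr 1 <;> refine Finset.sum_congr rfl fun i _ => ?_ <;>
    simp [Fin.append_left, Fin.append_right]

lemma comb_eq_append {p k s : ℕ} (R : Fin k → Fin s → ZMod p) (a : Fin k → ZMod p) :
    (fun z => ∑ j, a j * (Fin.append (fun i => if i = j then (1:ZMod p) else 0) (R j)) z)
      = Fin.append a (fun i => ∑ j, a j * R j i) := by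
  funext z
  induction z using Fin.addCases with
  | left i => simp [Fin.append_left, mul_ite, Finset.sum_ite_eq]
  | right i => simp [Fin.append_right]

lemma card_sparse (p n w : ℕ) [NeZero p] (hn : 0 < n) :
    (univ.filter fun a : Fin n → ZMod p => (supp a).card ≤ w).card ≤ (n * p) ^ w := by
  classical
  set g : (Fin w → Fin n × ZMod p) → (Fin n → ZMod p) :=
    fun f x => ∑ i, if (f i).1 = x then (f i).2 else 0 with hg
  have hsub : (univ.filter fun a : Fin n → ZMod p => (supp a).card ≤ w)
      ⊆ univ.image g := by
    intro a ha
    simp only [mem_filter, mem_univ, true_and] at ha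
    rw [mem_image]
    set T := supp a with hT
    have e := T.equivFin
    refine ⟨fun i => if h : (i : ℕ) < T.card then
      (((e.symm ⟨(i : ℕ), h⟩ : T) : Fin n), a ((e.symm ⟨(i : ℕ), h⟩ : T) : Fin n))
      else (⟨0, hn⟩, 0), mem_univ _, ?_⟩
    funext x
    simp only [hg]
    by_cases hx : x ∈ T
    · set i₀ : Fin w := ⟨(e ⟨x, hx⟩ : ℕ), lt_of_lt_of_le (e ⟨x, hx⟩).2 ha⟩ with hi₀
      rw [Finset.sum_eq_single i₀]
      · have h1 : ((i₀ : ℕ)) < T.card := (e ⟨x, hx⟩).2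
        rw [dif_pos h1]
        have : (⟨(i₀ : ℕ), h1⟩ : Fin T.card) = e ⟨x, hx⟩ := rfl
        rw [this, Equiv.symm_apply_apply]
        simp
      · intro i _ hne
        by_cases h2 : (i : ℕ) < T.card
        · rw [dif_pos h2]
          by_cases h3 : ((e.symm ⟨(i : ℕ), h2⟩ : T) : Fin n) = x
          · exfalso
            have : (e.symm ⟨(i : ℕ), h2⟩ : T) = ⟨x, hx⟩ := Subtype.ext h3
            have h4 : (⟨(i : ℕ), h2⟩ : Fin T.card) = e ⟨x, hx⟩ := by
              rw [← this, Equiv.apply_symm_apply]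
            apply hne
            apply Fin.ext
            have := congrArg (fun z : Fin T.card => (z : ℕ)) h4
            simpa [hi₀] using this
          · rw [if_neg h3]
        · rw [dif_neg h2]
          simp
      · intro h; exact absurd (mem_univ i₀) h
    · have hax : a x = 0 := by
        by_contra h
        exact hx (by simp [hT, supp, h])
      rw [hax]
      apply Finset.sum_eq_zero
      intro i _
      by_cases h2 : (i : ℕ) < T.card
      · rw [dif_pos h2]
        by_cases h3 : ((e.symm ⟨(i : ℕ), h2⟩ : T) : Fin n) = x
        · exfalso; exact hx (h3 ▸ (e.symm ⟨(i : ℕ), h2⟩).2)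
        · rw [if_neg h3]
      · rw [dif_neg h2]; simp
  calc (univ.filter fun a : Fin n → ZMod p => (supp a).card ≤ w).card
      ≤ (univ.image g).card := Finset.card_le_card hsub
    _ ≤ (univ : Finset (Fin w → Fin n × ZMod p)).card := Finset.card_image_le
    _ = (n * p) ^ w := by
        simp [Fintype.card_prod, ZMod.card]

lemma card_comb_mem_le {p : ℕ} [NeZero p] {k s : ℕ} (a : Fin k → ZMod p) [Fact p.Prime]
    (ha : a ≠ 0) (V : Finset (Fin s → ZMod p)) :
    (univ.filter fun R : Fin k → Fin s → ZMod p =>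
        (fun i => ∑ j, a j * R j i) ∈ V).card ≤ V.card * p ^ (s * (k - 1)) := by
  classical
  obtain ⟨j₀, hj₀⟩ : ∃ j, a j ≠ 0 := by
    by_contra h
    push_neg at h
    exact ha (funext h)
  set F : (Fin k → Fin s → ZMod p) →
      (Fin s → ZMod p) × ({j : Fin k // j ≠ j₀} → Fin s → ZMod p) :=
    fun R => (fun i => ∑ j, a j * R j i, fun j => R (j : Fin k)) with hF
  have hinj : Set.InjOn F
      ↑(univ.filter fun R : Fin k → Fin s → ZMod p =>
        (fun i => ∑ j, a j * R j i) ∈ V) := by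
    intro R _ R' _ hRR
    have h1 : ∀ (j : Fin k), j ≠ j₀ → R j = R' j := fun j hj =>
      congrFun (congrArg Prod.snd hRR) ⟨j, hj⟩
    have h2 : (fun i => ∑ j, a j * R j i) = (fun i => ∑ j, a j * R' j i) :=
      congrArg Prod.fst hRR
    funext j i
    by_cases hj : j = j₀
    · subst hj
      have h3 := congrFun h2 i
      rw [← Finset.add_sum_erase _ _ (mem_univ j), ← Finset.add_sum_erase _ _ (mem_univ j)] at h3
      have h4 : ∑ x ∈ univ.erase j, a x * R x i = ∑ x ∈ univ.erase j, a x * R' x i := by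
        refine Finset.sum_congr rfl fun x hx => ?_
        rw [h1 x (Finset.ne_of_mem_erase hx)]
      rw [h4] at h3
      exact mul_left_cancel₀ hj₀ (add_right_cancel h3)
    · exact congrFun (h1 j hj) i
  have hmaps : ∀ R ∈ (univ.filter fun R : Fin k → Fin s → ZMod p =>
      (fun i => ∑ j, a j * R j i) ∈ V),
      F R ∈ V ×ˢ (univ : Finset ({j : Fin k // j ≠ j₀} → Fin s → ZMod p)) := by
    intro R hR
    simp only [mem_filter, mem_univ, true_and] at hR
    simp [hF, Finset.mem_product, hR]
  calc _ ≤ (V ×ˢ (univ : Finset ({j : Fin k // j ≠ j₀} → Fin s → ZMod p))).card :=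
        Finset.card_le_card_of_injOn F hmaps hinj
    _ = V.card * p ^ (s * (k - 1)) := by
        rw [Finset.card_product]
        congr 1
        rw [Finset.card_univ, Fintype.card_fun]
        have hsub : Fintype.card {j : Fin k // j ≠ j₀} = k - 1 := by
          simp [Fintype.card_subtype_compl]
        rw [hsub]
        simp [ZMod.card, ← pow_mul]

lemma exists_good_R {p : ℕ} [Fact p.Prime] {k s r : ℕ} (hk : 1 ≤ k) (hs : 1 ≤ s)
    (hr : 1 ≤ r) (hcount : ((k * p) * (s * p)) ^ (r - 1) < p ^ s) :
    ∃ R : Fin k → Fin s → ZMod p, ∀ a : Fin k → ZMod p, a ≠ 0 →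
      r ≤ (supp a).card + (supp fun i => ∑ j, a j * R j i).card := by
  classical
  haveI : NeZero p := ⟨(Fact.out : p.Prime).ne_zero⟩
  by_contra hcon
  push_neg at hcon
  set A : Finset (Fin k → ZMod p) :=
    univ.filter (fun a => a ≠ 0 ∧ (supp a).card ≤ r - 1) with hA
  set V : Finset (Fin s → ZMod p) :=
    univ.filter (fun v => (supp v).card ≤ r - 1) with hV
  have hsub : (univ : Finset (Fin k → Fin s → ZMod p)) ⊆
      A.biUnion (fun a => univ.filter fun R => (fun i => ∑ j, a j * R j i) ∈ V) := by
    intro R _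
    obtain ⟨a, ha0, hlt⟩ := hcon R
    rw [mem_biUnion]
    refine ⟨a, ?_, ?_⟩
    · rw [hA, mem_filter]
      exact ⟨mem_univ _, ha0, by omega⟩
    · rw [mem_filter]
      refine ⟨mem_univ _, ?_⟩
      rw [hV, mem_filter]
      exact ⟨mem_univ _, by omega⟩
  have hAcard : A.card ≤ (k * p) ^ (r - 1) := by
    calc A.card ≤ (univ.filter fun a : Fin k → ZMod p => (supp a).card ≤ r - 1).card := by
          apply Finset.card_le_card
          intro a ha
          rw [hA, mem_filter] at ha
          rw [mem_filter]
          exact ⟨ha.1, ha.2.2⟩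
      _ ≤ (k * p) ^ (r - 1) := card_sparse p k (r-1) hk
  have hVcard : V.card ≤ (s * p) ^ (r - 1) := card_sparse p s (r-1) hs
  have hbig : (univ : Finset (Fin k → Fin s → ZMod p)).card
      ≤ A.card * ((s * p) ^ (r - 1) * p ^ (s * (k - 1))) := by
    calc (univ : Finset (Fin k → Fin s → ZMod p)).card
        ≤ ∑ a ∈ A, (univ.filter fun R : Fin k → Fin s → ZMod p =>
            (fun i => ∑ j, a j * R j i) ∈ V).card :=
          le_trans (Finset.card_le_card hsub) (Finset.card_biUnion_le)
      _ ≤ ∑ _a ∈ A, (s * p) ^ (r - 1) * p ^ (s * (k - 1)) := by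
          apply Finset.sum_le_sum
          intro a ha
          rw [hA, mem_filter] at ha
          calc _ ≤ V.card * p ^ (s * (k - 1)) := card_comb_mem_le a ha.2.1 V
            _ ≤ (s * p) ^ (r - 1) * p ^ (s * (k - 1)) :=
              Nat.mul_le_mul_right _ hVcard
      _ = A.card * ((s * p) ^ (r - 1) * p ^ (s * (k - 1))) := by
          rw [Finset.sum_const, smul_eq_mul]
  have hcardU : (univ : Finset (Fin k → Fin s → ZMod p)).card = p ^ (s * k) := by
    rw [Finset.card_univ]
    simp [Fintype.card_fun, ZMod.card, ← pow_mul, mul_comm]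
  have hsk : s * k = s + s * (k - 1) := by
    cases k with
    | zero => omega
    | succ k' => simp [Nat.mul_succ, Nat.succ_sub_one, Nat.mul_comm]; ring
  have hfinal : p ^ (s * k) < p ^ (s * k) := by
    calc p ^ (s * k) ≤ A.card * ((s * p) ^ (r - 1) * p ^ (s * (k - 1))) := hcardU ▸ hbig
      _ ≤ (k * p) ^ (r - 1) * ((s * p) ^ (r - 1) * p ^ (s * (k - 1))) :=
          Nat.mul_le_mul_right _ hAcard
      _ = ((k * p) * (s * p)) ^ (r - 1) * p ^ (s * (k - 1)) := by
          rw [mul_pow]; ring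
      _ < p ^ s * p ^ (s * (k - 1)) :=
          Nat.mul_lt_mul_of_lt_of_le hcount (le_refl _)
            (Nat.pow_pos (Fact.out : p.Prime).pos)
      _ = p ^ (s * k) := by rw [← pow_add, hsk]
  exact absurd hfinal (lt_irrefl _)

lemma poly_lt_exp (p r : ℕ) (hp : 2 ≤ p) (hr : 1 ≤ r) :
    ∃ M : ℕ, ∀ m : ℕ, M ≤ m → (p^2 * r * m)^(r-1) < p^m := by
  have hp1 : (1:ℝ) < (p:ℝ) := by exact_mod_cast lt_of_lt_of_le one_lt_two hp
  have hrpos : (0:ℝ) < (r:ℝ) := by exact_mod_cast hr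
  have hC : (0:ℝ) < ((p:ℝ)^2 * r)^(r-1) := pow_pos (by positivity) _
  have htend := tendsto_pow_const_div_const_pow_of_one_lt (r-1) hp1
  have hev : ∀ᶠ m : ℕ in Filter.atTop,
      (m:ℝ)^(r-1)/(p:ℝ)^m < (((p:ℝ)^2 * r)^(r-1))⁻¹ :=
    htend.eventually (gt_mem_nhds (by positivity))
  obtain ⟨M, hM⟩ := Filter.eventually_atTop.mp hev
  refine ⟨M, fun m hm => ?_⟩
  have h1 := hM m hm
  have hppos : (0:ℝ) < (p:ℝ)^m := by positivity
  rw [div_lt_iff₀ hppos] at h1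
  have h2 : ((p:ℝ)^2 * r)^(r-1) * (m:ℝ)^(r-1) < (p:ℝ)^m := by
    calc ((p:ℝ)^2 * r)^(r-1) * (m:ℝ)^(r-1)
        < ((p:ℝ)^2 * r)^(r-1) * ((((p:ℝ)^2 * r)^(r-1))⁻¹ * (p:ℝ)^m) := by
          exact mul_lt_mul_of_pos_left h1 hC
      _ = (p:ℝ)^m := by field_simp
  have h3 : (((p^2*r*m : ℕ)):ℝ)^(r-1) < (((p^m : ℕ)):ℝ) := by
    push_cast
    calc ((p:ℝ)^2*(r:ℝ)*(m:ℝ))^(r-1) = ((p:ℝ)^2 * r)^(r-1) * (m:ℝ)^(r-1) := by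
          rw [mul_pow]
      _ < (p:ℝ)^m := h2
  exact_mod_cast h3

lemma good_card {p k s : ℕ} (hp : p.Prime) (R : Fin k → Fin s → ZMod p) :
    2^k ≤ ((Fintype.piFinset fun _ : Fin (k+s) => ({0, 1} : Finset (ZMod p))).filter
      fun x => ∀ i : Fin k,
        evalForm (Fin.append (fun i' => if i' = i then (1:ZMod p) else 0) (R i)) x
          ∈ ({0, 1} : Finset (ZMod p))).card := by
  classical
  haveI : Fact (1 < p) := ⟨hp.one_lt⟩
  have h01 : ({0, 1} : Finset (ZMod p)).card = 2 := by
    rw [Finset.card_pair]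
    exact zero_ne_one
  have hcard : (Fintype.piFinset fun _ : Fin k => ({0,1} : Finset (ZMod p))).card = 2^k := by
    rw [Fintype.card_piFinset]
    simp [h01]
  rw [← hcard]
  apply Finset.card_le_card_of_injOn (fun z => Fin.append z (fun _ => (0 : ZMod p)))
  · intro z hz
    rw [Finset.mem_coe, Finset.mem_filter]
    constructor
    · rw [Fintype.mem_piFinset]
      intro i
      induction i using Fin.addCases with
      | left i => simpa [Fin.append_left] using Fintype.mem_piFinset.mp hz i
      | right i => simp [Fin.append_right]
    · intro j
      have : evalForm (Fin.append (fun i' => if i' = j then (1:ZMod p) else 0) (R j))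
          (Fin.append z (fun _ => (0:ZMod p))) = z j := by
        rw [evalForm, Fin.sum_univ_add]
        simp [Fin.append_left, Fin.append_right, ite_mul, Finset.sum_ite_eq]
      rw [this]
      exact Fintype.mem_piFinset.mp hz j
  · intro z _ z' _ h
    funext i
    have := congrFun h (Fin.castAdd s i)
    simpa [Fin.append_left] using this

theorem stmt_14 {p : ℕ} (hp : p.Prime) (hp3 : 3 ≤ p) (r : ℕ) (hr : 1 ≤ r)
    (ε : ℝ) (hε : 0 < ε) :
    ∃ K : ℕ, ∀ k : ℕ, K ≤ k →
      ∃ (n : ℕ) (φ : Fin k → Fin n → ZMod p),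
        (∀ a : Fin k → ZMod p, a ≠ 0 →
          r ≤ (supp fun z => ∑ j, a j * φ j z).card) ∧
        (k : ℝ) ^ (-(((1 + ε) * Real.log 2 / Real.log p) * r)) ≤
          (((Fintype.piFinset fun _ : Fin n => ({0, 1} : Finset (ZMod p))).filter
              fun x => ∀ i, evalForm (φ i) x ∈ ({0, 1} : Finset (ZMod p))).card : ℝ)
            / (2 : ℝ) ^ n := by
  classical
  haveI : Fact p.Prime := ⟨hp⟩
  haveI : NeZero p := ⟨hp.ne_zero⟩
  have hp2 : 2 ≤ p := le_trans (by norm_num) hp3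
  have hp1 : 1 < p := hp.one_lt
  obtain ⟨M, hM⟩ := poly_lt_exp p r hp2 hr
  have hlogt : Filter.Tendsto (fun k : ℕ => Real.log k) Filter.atTop Filter.atTop :=
    Real.tendsto_log_atTop.comp tendsto_natCast_atTop_atTop
  obtain ⟨K₂, hK₂⟩ := Filter.eventually_atTop.mp (hlogt.eventually_ge_atTop (Real.log p / ε))
  refine ⟨max 2 (max (p^M) K₂), fun k hk => ?_⟩
  have hk2 : 2 ≤ k := le_trans (le_max_left _ _) hk
  have hkM : p^M ≤ k := le_trans (le_trans (le_max_left _ _) (le_max_right _ _)) hk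
  have hkK₂ : K₂ ≤ k := le_trans (le_trans (le_max_right _ _) (le_max_right _ _)) hk
  set m : ℕ := Nat.log p k + 1 with hm
  set s : ℕ := r * m with hs
  have hk0 : k ≠ 0 := by omega
  have hkm : k < p ^ m := Nat.lt_pow_succ_log_self hp1 k
  have hMm : M ≤ m := by
    have : M ≤ Nat.log p k := (Nat.le_log_iff_pow_le hp1 hk0).mpr hkM
    omega
  have hm1 : 1 ≤ m := by omega
  have hs1 : 1 ≤ s := by
    have := Nat.mul_le_mul hr hm1
    simpa [hs] using this
  have hcount : ((k * p) * (s * p)) ^ (r - 1) < p ^ s := by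
    have h1 : (k*p)*(s*p) ≤ (p^2*r*m) * p^m := by
      have e1 : (k*p)*(s*p) = (p^2*(r*m))*k := by rw [hs]; ring
      rw [e1]
      calc (p^2*(r*m))*k ≤ (p^2*(r*m))*p^m := Nat.mul_le_mul_left _ (le_of_lt hkm)
        _ = (p^2*r*m)*p^m := by ring
    have hXpos : 0 < (p^m)^(r-1) := Nat.pow_pos (Nat.pow_pos hp.pos)
    calc ((k*p)*(s*p))^(r-1) ≤ ((p^2*r*m) * p^m)^(r-1) := Nat.pow_le_pow_left h1 _
      _ = (p^2*r*m)^(r-1) * (p^m)^(r-1) := mul_pow _ _ _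
      _ < p^m * (p^m)^(r-1) :=
          Nat.mul_lt_mul_of_lt_of_le (hM m hMm) (le_refl _) hXpos
      _ = p ^ s := by
          rw [← pow_succ']
          rw [show (r-1)+1 = r from by omega, ← pow_mul, hs, Nat.mul_comm]
  obtain ⟨R, hR⟩ := exists_good_R (p := p) (by omega : 1 ≤ k) hs1 hr hcount
  set φ : Fin k → Fin (k+s) → ZMod p :=
    fun j => Fin.append (fun i => if i = j then (1:ZMod p) else 0) (R j) with hφ
  refine ⟨k + s, φ, ?_, ?_⟩
  · intro a ha
    have e2 : (fun z => ∑ j, a j * φ j z) = Fin.append a (fun i => ∑ j, a j * R j i) := by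
      rw [hφ]; exact comb_eq_append R a
    rw [e2, supp_append_card]
    exact hR a ha
  · have hgood := good_card hp R
    have hb : ((2:ℝ)^k) ≤
        ((((Fintype.piFinset fun _ : Fin (k+s) => ({0, 1} : Finset (ZMod p))).filter
          fun x => ∀ i, evalForm (φ i) x ∈ ({0, 1} : Finset (ZMod p))).card : ℕ) : ℝ) := by
      simp only [hφ]
      exact_mod_cast hgood
    have hkpos : (0:ℝ) < k := by exact_mod_cast (by omega : 0 < k)
    have hlogp : (0:ℝ) < Real.log p := Real.log_pos (by exact_mod_cast hp1)
    have hlog2 : (0:ℝ) < Real.log 2 := Real.log_pos one_lt_two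
    have hεlog : Real.log p ≤ ε * Real.log k := by
      have h6 := hK₂ k hkK₂
      rw [div_le_iff₀ hε] at h6
      linarith
    have hm2 : m - 1 = Nat.log p k := by omega
    have hmlogp : ((m:ℝ) - 1) * Real.log p ≤ Real.log k := by
      have h4 : ((p:ℝ))^(m-1) ≤ (k:ℝ) := by
        rw [hm2]
        exact_mod_cast Nat.pow_log_le_self p hk0
      have h5 := Real.log_le_log (by positivity) h4
      rw [Real.log_pow] at h5
      have h7 : ((m-1 : ℕ):ℝ) = (m:ℝ) - 1 := by
        push_cast [Nat.cast_sub hm1]; ring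
      rw [h7] at h5
      exact h5
    have Hm : (m:ℝ) * Real.log p ≤ (1+ε) * Real.log k := by nlinarith
    set c : ℝ := ((1 + ε) * Real.log 2 / Real.log p) * r with hc
    have hpow : (2:ℝ)^s ≤ (k:ℝ) ^ c := by
      rw [← Real.rpow_natCast 2 s, Real.rpow_def_of_pos (by norm_num : (0:ℝ) < 2),
        Real.rpow_def_of_pos hkpos, Real.exp_le_exp]
      have e3 : Real.log k * c = ((1+ε) * Real.log k * Real.log 2 * r) / Real.log p := by
        rw [hc]; ring
      rw [e3, le_div_iff₀ hlogp]
      have hsreal : ((s:ℕ):ℝ) = (r:ℝ) * (m:ℝ) := by rw [hs]; push_cast; ring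
      calc Real.log 2 * (s:ℝ) * Real.log p
          = Real.log 2 * (r:ℝ) * ((m:ℝ) * Real.log p) := by rw [hsreal]; ring
        _ ≤ Real.log 2 * r * ((1+ε) * Real.log k) :=
            mul_le_mul_of_nonneg_left Hm (by positivity)
        _ = (1+ε) * Real.log k * Real.log 2 * r := by ring
    calc (k:ℝ) ^ (-c) = ((k:ℝ)^c)⁻¹ := Real.rpow_neg hkpos.le c
      _ ≤ ((2:ℝ)^s)⁻¹ := inv_anti₀ (by positivity) hpow
      _ = (2:ℝ)^k / 2^(k+s) := by rw [pow_add]; field_simp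
      _ ≤ _ := by gcongr
end

section
/- Let p be a prime and let φ : 𝔽_p^n → 𝔽_p be a mod-p form whose support has size at least p − 1. Then the image of {0,1}^n under φ is all of 𝔽_p; that is, for every y ∈ 𝔽_p there exists x ∈ {0,1}^n with φ(x) = y. -/
open Finset

open Pointwise in
lemma ach_card {p n : ℕ} (hp : p.Prime) (φ : Fin n → ZMod p) (T : Finset (Fin n))
    (hT : T ⊆ supp φ) :
    min p (T.card + 1) ≤ (T.powerset.image (fun s => ∑ i ∈ s, φ i)).card := by
  classical
  induction T using Finset.induction with
  | empty => simp
  | @insert a T ha IH =>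
    have hTsub : T ⊆ supp φ := fun i hi => hT (mem_insert_of_mem hi)
    have hIH := IH hTsub
    have hφa : φ a ≠ 0 := by
      have := hT (mem_insert_self a T)
      simpa [supp] using this
    have hset : (insert a T).powerset.image (fun s => ∑ i ∈ s, φ i)
        = ({0, φ a} : Finset (ZMod p)) + T.powerset.image (fun s => ∑ i ∈ s, φ i) := by
      ext z
      simp only [mem_image, mem_powerset, Finset.mem_add, mem_insert, mem_singleton]
      constructor
      · rintro ⟨s, hs, rfl⟩
        rw [Finset.subset_insert_iff] at hs
        by_cases has : a ∈ s
        · refine ⟨φ a, Or.inr rfl, ∑ i ∈ s.erase a, φ i, ⟨s.erase a, hs, rfl⟩, ?_⟩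
          rw [← Finset.add_sum_erase _ _ has]
        · refine ⟨0, Or.inl rfl, ∑ i ∈ s, φ i, ⟨s, ?_, rfl⟩, by ring⟩
          rwa [Finset.erase_eq_of_notMem has] at hs
      · rintro ⟨w, hw, _, ⟨s, hs, rfl⟩, rfl⟩
        rcases hw with rfl | rfl
        · exact ⟨s, hs.trans (subset_insert a T), by ring⟩
        · refine ⟨insert a s, insert_subset_insert a hs, ?_⟩
          rw [Finset.sum_insert (fun h => ha (hs h))]
    rw [hset]
    have hcard2 : ({0, φ a} : Finset (ZMod p)).card = 2 := by
      rw [card_insert_of_notMem (by simpa using (Ne.symm hφa))]; simp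
    have hne : (T.powerset.image (fun s => ∑ i ∈ s, φ i)).Nonempty :=
      ⟨∑ i ∈ (∅:Finset (Fin n)), φ i, mem_image_of_mem _ (by simp)⟩
    have hcd := ZMod.cauchy_davenport hp (s := {0, φ a}) (t := _) (by simp) hne
    rw [hcard2] at hcd
    rw [card_insert_of_notMem ha]
    omega


theorem stmt_15 {p n : ℕ} (hp : p.Prime) (φ : Fin n → ZMod p)
    (hsupp : p - 1 ≤ (supp φ).card) (y : ZMod p) :
    ∃ x : Fin n → ZMod p, (∀ i, x i = 0 ∨ x i = 1) ∧ evalForm φ x = y := by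
  classical
  obtain ⟨T, hTsub, hTcard⟩ := Finset.exists_subset_card_eq hsupp
  have h := ach_card hp φ T hTsub
  have hp1 : 1 ≤ p := hp.one_lt.le
  rw [hTcard] at h
  have hmin : min p (p - 1 + 1) = p := by omega
  rw [hmin] at h
  haveI : NeZero p := ⟨hp.ne_zero⟩
  have huniv : T.powerset.image (fun s => ∑ i ∈ s, φ i) = Finset.univ := by
    apply Finset.eq_univ_of_card
    have hle := Finset.card_le_univ (T.powerset.image (fun s => ∑ i ∈ s, φ i))
    have hc : Fintype.card (ZMod p) = p := ZMod.card p
    omega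
  have hy : y ∈ T.powerset.image (fun s => ∑ i ∈ s, φ i) := huniv ▸ mem_univ y
  obtain ⟨s, -, rfl⟩ := mem_image.1 hy
  refine ⟨fun i => if i ∈ s then 1 else 0, fun i => by by_cases h : i ∈ s <;> simp [h], ?_⟩
  unfold evalForm
  simp [mul_ite, Finset.sum_ite_mem]
end

section
/- Let p ≥ 3 be a prime and let φ : 𝔽_p^n → 𝔽_p be a mod-p form whose support has size r. Then for every y ∈ 𝔽_p, the probability ℙ_{x∈{0,1}^n}(φ(x) = y) is an integer multiple of 2^{−r}, and consequently |ℙ_{x∈{0,1}^n}(φ(x) = y) − 1/p| ≥ 1/(2^r·p). -/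
open Finset

/-! Outside its support the form ignores the coordinates of `x`, so over `S^n` each value of
`φ` is taken a multiple of `|S|^(n - r)` times, `r = |supp φ|`. For `S = {0, 1}` the probability
is therefore `m / 2^r`, and `m / 2^r ≠ 1 / p` because the odd prime `p` does not divide `2^r`;
two distinct fractions with denominators `2^r` and `p` differ by at least `1 / (2^r p)`. -/

section Solutions

variable {p n : ℕ}

def solutionsIn (S : Finset (ZMod p)) (φ : Fin n → ZMod p) (y : ZMod p) :
    Finset (Fin n → ZMod p) :=
  (Fintype.piFinset fun _ : Fin n => S).filter fun x => evalForm φ x = y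

lemma card_supp_succ (φ : Fin (n + 1) → ZMod p) :
    (supp φ).card = (if φ 0 = 0 then 0 else 1) + (supp (Fin.tail φ)).card := by
  rw [supp, supp, Finset.card_filter, Finset.card_filter, Fin.sum_univ_succ, ite_not]
  rfl

lemma card_supp_le (φ : Fin n → ZMod p) : (supp φ).card ≤ n :=
  (Finset.card_filter_le _ _).trans_eq (Finset.card_fin n)

lemma evalForm_cons (φ : Fin (n + 1) → ZMod p) (a : ZMod p) (x : Fin n → ZMod p) :
    evalForm φ (Fin.cons a x) = φ 0 * a + evalForm (Fin.tail φ) x := by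
  simp [evalForm, Fin.sum_univ_succ, Fin.tail]

lemma piFinset_const_succ (S : Finset (ZMod p)) :
    Fintype.piFinset (fun _ : Fin (n + 1) => S) =
      (S ×ˢ Fintype.piFinset fun _ : Fin n => S).map (Fin.consEquiv fun _ => ZMod p).toEmbedding := by
  have h := Finset.filter_piFinset_eq_map_consEquiv (fun _ : Fin (n + 1) => S) fun _ => True
  rw [Finset.filter_true, Finset.filter_true] at h
  exact h

lemma card_solutionsIn_succ (S : Finset (ZMod p)) (φ : Fin (n + 1) → ZMod p) (y : ZMod p) :
    (solutionsIn S φ y).card = ∑ a ∈ S, (solutionsIn S (Fin.tail φ) (y - φ 0 * a)).card := by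
  rw [solutionsIn, piFinset_const_succ, Finset.filter_map, Finset.card_map, Finset.card_filter,
    Finset.sum_product]
  refine Finset.sum_congr rfl fun a _ => ?_
  rw [solutionsIn, Finset.card_filter]
  refine Finset.sum_congr rfl fun x _ => ?_
  change (if evalForm φ (Fin.cons a x) = y then 1 else 0) = _
  simp only [evalForm_cons, eq_sub_iff_add_eq']

lemma pow_card_dvd_card_solutionsIn (S : Finset (ZMod p)) (φ : Fin n → ZMod p) (y : ZMod p) :
    S.card ^ (n - (supp φ).card) ∣ (solutionsIn S φ y).card := by
  induction n generalizing y with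
  | zero => exact one_dvd _
  | succ n ih =>
    have hle := card_supp_le (Fin.tail φ)
    rw [card_solutionsIn_succ, card_supp_succ]
    by_cases h : φ 0 = 0
    · simp only [h, zero_mul, sub_zero, Finset.sum_const, smul_eq_mul, if_pos]
      rw [show n + 1 - (0 + (supp (Fin.tail φ)).card) = n - (supp (Fin.tail φ)).card + 1 by omega,
        pow_succ']
      exact mul_dvd_mul_left _ (ih _ y)
    · rw [if_neg h, show n + 1 - (1 + (supp (Fin.tail φ)).card) = n - (supp (Fin.tail φ)).card by
        omega]
      exact Finset.dvd_sum fun a _ => ih _ _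

end Solutions

lemma inv_mul_le_abs_div_sub_inv {m q p : ℕ} (hq : 0 < q) (hp : 0 < p) (hmpq : m * p ≠ q) :
    ((q : ℝ) * p)⁻¹ ≤ |(m : ℝ) / q - (p : ℝ)⁻¹| := by
  have hqR : (0 : ℝ) < q := Nat.cast_pos.2 hq
  have hpR : (0 : ℝ) < p := Nat.cast_pos.2 hp
  have hne : ((m : ℤ) * p - q) ≠ 0 := sub_ne_zero.2 (by exact_mod_cast hmpq)
  have hone : (1 : ℝ) ≤ |(m : ℝ) * p - q| := by exact_mod_cast Int.one_le_abs hne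
  have heq : (m : ℝ) / q - (p : ℝ)⁻¹ = ((m : ℝ) * p - q) / (q * p) := by
    field_simp
  rw [heq, abs_div, abs_of_pos (mul_pos hqR hpR), inv_eq_one_div]
  gcongr

lemma cast_div_pow_eq_of_eq_pow_sub_mul {N k b r n : ℕ} (hb : b ≠ 0) (hr : r ≤ n)
    (h : N = b ^ (n - r) * k) : (N : ℝ) / (b : ℝ) ^ n = (k : ℝ) / (b : ℝ) ^ r := by
  have hbR : (b : ℝ) ≠ 0 := Nat.cast_ne_zero.2 hb
  rw [h, ← Nat.sub_add_cancel hr, Nat.add_sub_cancel]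
  push_cast
  rw [pow_add]
  field_simp

theorem stmt_16 {p n : ℕ} (hp : p.Prime) (hp3 : 3 ≤ p) (φ : Fin n → ZMod p) (y : ZMod p) :
    (∃ m : ℕ,
      (((Fintype.piFinset fun _ : Fin n => ({0, 1} : Finset (ZMod p))).filter
          fun x => evalForm φ x = y).card : ℝ) / (2 : ℝ) ^ n
        = (m : ℝ) / (2 : ℝ) ^ (supp φ).card) ∧
    ((2 : ℝ) ^ (supp φ).card * (p : ℝ))⁻¹ ≤
      |(((Fintype.piFinset fun _ : Fin n => ({0, 1} : Finset (ZMod p))).filter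
          fun x => evalForm φ x = y).card : ℝ) / (2 : ℝ) ^ n - (p : ℝ)⁻¹| := by
  have : Fact p.Prime := ⟨hp⟩
  obtain ⟨k, hk⟩ := pow_card_dvd_card_solutionsIn {0, 1} φ y
  rw [Finset.card_pair zero_ne_one] at hk
  have hprob := cast_div_pow_eq_of_eq_pow_sub_mul two_ne_zero (card_supp_le φ) hk
  push_cast [solutionsIn] at hprob
  have hkp : k * p ≠ 2 ^ (supp φ).card := fun hkp => by
    have h2 := (Nat.prime_dvd_prime_iff_eq hp Nat.prime_two).1
      (hp.dvd_of_dvd_pow (hkp ▸ dvd_mul_left p k))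
    omega
  refine ⟨⟨k, hprob⟩, ?_⟩
  rw [hprob]
  exact_mod_cast inv_mul_le_abs_div_sub_inv (pow_pos two_pos _) hp.pos hkp
end
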